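/- arXiv:2311.17896 — 3 statements merged into one kernel-verified Lean document; each statement's English description precedes it below -/
import Mathlib

section
/- Let M be an n×n matrix over K = 𝔽_{q^n}, let h₀,…,h_{n−1} ∈ K be such that the 𝔽_q-linear map h(x) = Σ_{i=0}^{n−1} hᵢ x^{qⁱ} is a bijection of K, and set M′ = Σ_{i=0}^{n−1} hᵢ · M^{[σⁱ]}. Then M′ lies in the K-linear span of {D_z(M) : z ∈ K}, and moreover {D_z(M′) : z ∈ K} = {D_z(M) : z ∈ K}. -/
/-!
The twist `σ` is `q`-semilinear and has period `n`, so `D_z(c • σ^i M) = D_{(zc)^{q^{(n-1)i}}}(M)`;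
as `D_z(M)` is additive in `z` and in `M`, this gives `D_z(M') = D_{w z}(M)` with
`w z = ∑ᵢ (z hᵢ)^{q^{(n-1)i}}`. The map `w` is the adjoint of `h` for the trace form `Tr(xy)`,
`Tr u = ∑_{j<n} u^{q^j}`; since `h` is onto and `Tr ≠ 0`, `w` is injective, hence bijective, and
the two contraction spaces agree. For the span statement, the Moore vectors `(z^{q^j})_{j<n}`
span `K^n`, because a linear relation between their coordinates is a `q`-polynomial of degree
`< q^n` vanishing on all of `K`.
-/

/-- The σ-twist of a matrix: `(M^[σ])_{i,j} = (M_{i-1,j-1})^q` (indices mod `n`). -/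
def sigmaTwist (q : ℕ) {n : ℕ} {K : Type*} [Field K]
    (M : Matrix (ZMod n) (ZMod n) K) : Matrix (ZMod n) (ZMod n) K :=
  Matrix.of fun i j => (M (i - 1) (j - 1)) ^ q

/-- The contraction `D_z(M) = ∑_{j<n} z^{q^j} • M^{[σ^j]}`. -/
def contractionD (q n : ℕ) {K : Type*} [Field K] (z : K)
    (M : Matrix (ZMod n) (ZMod n) K) : Matrix (ZMod n) (ZMod n) K :=
  ∑ j ∈ Finset.range n, z ^ q ^ j • (sigmaTwist q)^[j] M

open Finset

theorem Finset.sum_range_succ_eq_sum_range_of_eq {M : Type*} [AddCancelCommMonoid M] {n : ℕ}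
    {f : ℕ → M} (hf : f n = f 0) : ∑ j ∈ range n, f (j + 1) = ∑ j ∈ range n, f j :=
  add_right_cancel <| (sum_range_succ' f n).symm.trans <| (sum_range_succ f n).trans <| by rw [hf]

section Frobenius

variable {K : Type*} [CommRing K] {q : ℕ}

theorem add_pow_pow_of_add_pow (hadd : ∀ x y : K, (x + y) ^ q = x ^ q + y ^ q) (j : ℕ)
    (x y : K) : (x + y) ^ q ^ j = x ^ q ^ j + y ^ q ^ j := by
  induction j with
  | zero => simp
  | succ j ih => simp only [pow_succ, pow_mul, ih, hadd]

theorem sum_pow_pow_of_add_pow (hadd : ∀ x y : K, (x + y) ^ q = x ^ q + y ^ q) {ι : Type*}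
    (s : Finset ι) (f : ι → K) (j : ℕ) : (∑ i ∈ s, f i) ^ q ^ j = ∑ i ∈ s, f i ^ q ^ j :=
  map_sum (AddMonoidHom.mk' (· ^ q ^ j) (add_pow_pow_of_add_pow hadd j)) f s

theorem pow_pow_mul_of_pow_pow {n : ℕ} (hper : ∀ x : K, x ^ q ^ n = x) (k : ℕ) (x : K) :
    x ^ q ^ (n * k) = x := by
  induction k with
  | zero => simp
  | succ k ih => rw [mul_add_one, pow_add, pow_mul, ih, hper]

end Frobenius

namespace FiniteField

variable {K : Type*} [Field K] [Fintype K] {q n : ℕ}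

theorem ne_zero_of_card_eq_pow (hK : Fintype.card K = q ^ n) : n ≠ 0 := by
  rintro rfl
  exact (Fintype.one_lt_card (α := K)).ne' (by rw [hK, pow_zero])

theorem one_lt_of_card_eq_pow (hK : Fintype.card K = q ^ n) : 1 < q :=
  (one_lt_pow_iff (ne_zero_of_card_eq_pow hK)).1 (hK ▸ Fintype.one_lt_card)

theorem add_pow_of_card_eq_pow (hK : Fintype.card K = q ^ n) (x y : K) :
    (x + y) ^ q = x ^ q + y ^ q := by
  obtain ⟨p, hchar⟩ := CharP.exists K
  obtain ⟨d, hp, hcard⟩ := FiniteField.card K p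
  have : Fact p.Prime := ⟨hp⟩
  have hdvd : q ∣ p ^ (d : ℕ) := hcard ▸ hK ▸ dvd_pow_self q (ne_zero_of_card_eq_pow hK)
  obtain ⟨e, -, rfl⟩ := (Nat.dvd_prime_pow hp).1 hdvd
  exact add_pow_char_pow ..

theorem pow_pow_of_card_eq_pow (hK : Fintype.card K = q ^ n) (x : K) : x ^ q ^ n = x :=
  hK ▸ FiniteField.pow_card x

theorem eq_zero_of_forall_sum_mul_pow_pow_eq_zero (hK : Fintype.card K = q ^ n) (a : Fin n → K)
    (ha : ∀ z : K, ∑ j, a j * z ^ q ^ (j : ℕ) = 0) : a = 0 := by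
  open Polynomial in
  set P : K[X] := ∑ j, C (a j) * X ^ q ^ (j : ℕ)
  have hq := one_lt_of_card_eq_pow hK
  have hP : P = 0 := by
    refine eq_zero_of_natDegree_lt_card_of_eval_eq_zero P Function.injective_id (fun z => ?_) ?_
    · simpa [P, eval_finsetSum] using ha z
    · refine (natDegree_sum_le_of_forall_le _ _ (n := q ^ (n - 1)) fun j _ => ?_).trans_lt ?_
      · exact (natDegree_C_mul_X_pow_le _ _).trans (Nat.pow_le_pow_right (by omega) (by omega))
      · rw [hK]; exact Nat.pow_lt_pow_right hq (by have := ne_zero_of_card_eq_pow hK; omega)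
  funext j
  have := congrArg (Polynomial.coeff · (q ^ (j : ℕ))) hP
  simpa [P, finsetSum_coeff, coeff_C_mul_X_pow, (Nat.pow_right_injective hq).eq_iff,
    Fin.val_inj] using this

theorem span_range_pow_pow_eq_top (hK : Fintype.card K = q ^ n) :
    Submodule.span K (Set.range fun z : K => fun j : Fin n => z ^ q ^ (j : ℕ)) = ⊤ := by
  set V : Matrix (Fin n) K K := Matrix.of fun j z => z ^ q ^ (j : ℕ)
  have hrows : LinearIndependent K V.row := by
    rw [← Matrix.vecMul_injective_iff, ← Matrix.coe_vecMulLinear, ← LinearMap.ker_eq_bot,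
      LinearMap.ker_eq_bot']
    exact fun a ha => eq_zero_of_forall_sum_mul_pow_pow_eq_zero hK a (congrFun ha)
  have hrank := hrows.rank_matrix
  rw [Matrix.rank_eq_finrank_span_cols, Fintype.card_fin] at hrank
  exact Submodule.eq_top_of_finrank_eq (hrank.trans (Module.finrank_fin_fun K).symm)

end FiniteField

section SigmaTwist

variable {K : Type*} [Field K] {q n : ℕ}

theorem sigmaTwist_iterate_apply (j : ℕ) (A : Matrix (ZMod n) (ZMod n) K) (a b : ZMod n) :
    (sigmaTwist q)^[j] A a b = A (a - j) (b - j) ^ q ^ j := by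
  induction j generalizing a b with
  | zero => simp
  | succ j ih =>
    rw [Function.iterate_succ_apply', sigmaTwist, Matrix.of_apply, ih, ← pow_mul, ← pow_succ]
    push_cast
    ring_nf

theorem sigmaTwist_iterate_smul (j : ℕ) (c : K) (A : Matrix (ZMod n) (ZMod n) K) :
    (sigmaTwist q)^[j] (c • A) = c ^ q ^ j • (sigmaTwist q)^[j] A := by
  ext a b
  simp [sigmaTwist_iterate_apply, mul_pow]

theorem sigmaTwist_iterate_sum (hadd : ∀ x y : K, (x + y) ^ q = x ^ q + y ^ q) (j : ℕ)
    {ι : Type*} (s : Finset ι) (A : ι → Matrix (ZMod n) (ZMod n) K) :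
    (sigmaTwist q)^[j] (∑ i ∈ s, A i) = ∑ i ∈ s, (sigmaTwist q)^[j] (A i) := by
  ext a b
  simp only [sigmaTwist_iterate_apply, Matrix.sum_apply, sum_pow_pow_of_add_pow hadd]

theorem sigmaTwist_iterate_self (hper : ∀ x : K, x ^ q ^ n = x) (A : Matrix (ZMod n) (ZMod n) K) :
    (sigmaTwist q)^[n] A = A := by
  ext a b
  simp [sigmaTwist_iterate_apply, hper]

end SigmaTwist

section Contraction

variable {K : Type*} [Field K] {q n : ℕ}

theorem contractionD_smul (z c : K) (A : Matrix (ZMod n) (ZMod n) K) :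
    contractionD q n z (c • A) = contractionD q n (z * c) A := by
  simp only [contractionD, sigmaTwist_iterate_smul, smul_smul, mul_pow]

theorem contractionD_sum (hadd : ∀ x y : K, (x + y) ^ q = x ^ q + y ^ q) (z : K) {ι : Type*}
    (s : Finset ι) (A : ι → Matrix (ZMod n) (ZMod n) K) :
    contractionD q n z (∑ i ∈ s, A i) = ∑ i ∈ s, contractionD q n z (A i) := by
  simp only [contractionD, sigmaTwist_iterate_sum hadd, smul_sum]
  exact sum_comm

theorem sum_contractionD (hadd : ∀ x y : K, (x + y) ^ q = x ^ q + y ^ q) {ι : Type*}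
    (s : Finset ι) (z : ι → K) (A : Matrix (ZMod n) (ZMod n) K) :
    ∑ i ∈ s, contractionD q n (z i) A = contractionD q n (∑ i ∈ s, z i) A := by
  simp only [contractionD, sum_pow_pow_of_add_pow hadd, sum_smul]
  exact sum_comm

theorem contractionD_sigmaTwist (hper : ∀ x : K, x ^ q ^ n = x) (z : K)
    (A : Matrix (ZMod n) (ZMod n) K) :
    contractionD q n z (sigmaTwist q A) = contractionD q n (z ^ q ^ (n - 1)) A := by
  obtain _ | m := n
  · simp [contractionD]
  simp only [contractionD]
  refine Eq.trans ?_ (sum_range_succ_eq_sum_range_of_eq ?_)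
  · refine sum_congr rfl fun j _ => ?_
    rw [Function.iterate_succ_apply, add_tsub_cancel_right, ← pow_mul, ← pow_add,
      add_left_comm, pow_add, pow_mul, hper]
  · rw [hper, sigmaTwist_iterate_self hper, pow_zero, pow_one, Function.iterate_zero_apply]

theorem contractionD_sigmaTwist_iterate (hper : ∀ x : K, x ^ q ^ n = x) (i : ℕ) (z : K)
    (A : Matrix (ZMod n) (ZMod n) K) :
    contractionD q n z ((sigmaTwist q)^[i] A) = contractionD q n (z ^ q ^ ((n - 1) * i)) A := by
  induction i generalizing z with
  | zero => simp
  | succ i ih =>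
    rw [Function.iterate_succ_apply', contractionD_sigmaTwist hper, ih, ← pow_mul, ← pow_add,
      mul_add_one, add_comm]

theorem contractionD_sum_smul_sigmaTwist_iterate (hadd : ∀ x y : K, (x + y) ^ q = x ^ q + y ^ q)
    (hper : ∀ x : K, x ^ q ^ n = x) (h : Fin n → K) (z : K) (M : Matrix (ZMod n) (ZMod n) K) :
    contractionD q n z (∑ i : Fin n, h i • (sigmaTwist q)^[(i : ℕ)] M) =
      contractionD q n (∑ i : Fin n, (z * h i) ^ q ^ ((n - 1) * i)) M := by
  simp only [contractionD_sum hadd, contractionD_smul, contractionD_sigmaTwist_iterate hper,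
    sum_contractionD hadd]

end Contraction

section Span

variable {K : Type*} [Field K] {q n : ℕ}

theorem contractionD_eq_linearCombination (z : K) (M : Matrix (ZMod n) (ZMod n) K) :
    contractionD q n z M = Fintype.linearCombination K (fun i : Fin n => (sigmaTwist q)^[i] M)
      (fun j => z ^ q ^ (j : ℕ)) := by
  rw [Fintype.linearCombination_apply, contractionD,
    Fin.sum_univ_eq_sum_range (fun j => z ^ q ^ j • (sigmaTwist q)^[j] M)]

theorem span_contractionD_eq_range [Fintype K] (hK : Fintype.card K = q ^ n)
    (M : Matrix (ZMod n) (ZMod n) K) :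
    Submodule.span K {A | ∃ z : K, A = contractionD q n z M} =
      LinearMap.range (Fintype.linearCombination K fun i : Fin n => (sigmaTwist q)^[i] M) := by
  have hset : {A | ∃ z : K, A = contractionD q n z M} =
      Fintype.linearCombination K (fun i : Fin n => (sigmaTwist q)^[i] M) ''
        Set.range fun z : K => fun j : Fin n => z ^ q ^ (j : ℕ) := by
    ext A
    simp [contractionD_eq_linearCombination, eq_comm]
  rw [hset, Submodule.span_image, FiniteField.span_range_pow_pow_eq_top hK, Submodule.map_top]

end Span

section Trace

variable {K : Type*} [Field K] {q n : ℕ}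

def frobeniusTrace (q n : ℕ) (u : K) : K :=
  ∑ j ∈ range n, u ^ q ^ j

theorem frobeniusTrace_sum (hadd : ∀ x y : K, (x + y) ^ q = x ^ q + y ^ q) {ι : Type*}
    (s : Finset ι) (f : ι → K) :
    frobeniusTrace q n (∑ i ∈ s, f i) = ∑ i ∈ s, frobeniusTrace q n (f i) := by
  simp only [frobeniusTrace, sum_pow_pow_of_add_pow hadd]
  exact sum_comm

theorem frobeniusTrace_pow_pow (hper : ∀ x : K, x ^ q ^ n = x) (m : ℕ) (u : K) :
    frobeniusTrace q n (u ^ q ^ m) = frobeniusTrace q n u := by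
  induction m generalizing u with
  | zero => simp
  | succ m ih =>
    rw [pow_succ', pow_mul, ih, frobeniusTrace, frobeniusTrace]
    refine (sum_congr rfl fun j _ => ?_).trans (sum_range_succ_eq_sum_range_of_eq (by simp [hper]))
    rw [← pow_mul, ← pow_succ']

theorem frobeniusTrace_mul_sum_mul_pow_pow (hadd : ∀ x y : K, (x + y) ^ q = x ^ q + y ^ q)
    (hper : ∀ x : K, x ^ q ^ n = x) (h : Fin n → K) (x y : K) :
    frobeniusTrace q n (x * ∑ i : Fin n, h i * y ^ q ^ (i : ℕ)) =
      frobeniusTrace q n ((∑ i : Fin n, (x * h i) ^ q ^ ((n - 1) * i)) * y) := by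
  rw [mul_sum, sum_mul, frobeniusTrace_sum hadd, frobeniusTrace_sum hadd]
  refine sum_congr rfl fun i _ => ?_
  have hn : 1 + (n - 1) = n := by have := i.pos; omega
  rw [← frobeniusTrace_pow_pow hper ((n - 1) * i), ← mul_assoc, mul_pow, ← pow_mul, ← pow_add,
    ← one_add_mul, hn, pow_pow_mul_of_pow_pow hper]

theorem FiniteField.exists_frobeniusTrace_ne_zero [Fintype K] (hK : Fintype.card K = q ^ n) :
    ∃ u : K, frobeniusTrace q n u ≠ 0 := by
  by_contra! htr
  have hone := FiniteField.eq_zero_of_forall_sum_mul_pow_pow_eq_zero hK 1 fun z => by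
    simpa [frobeniusTrace, Fin.sum_univ_eq_sum_range (fun j => z ^ q ^ j)] using htr z
  exact one_ne_zero (congrFun hone ⟨0, Nat.pos_of_ne_zero (ne_zero_of_card_eq_pow hK)⟩)

theorem FiniteField.surjective_sum_mul_pow_pow_adjoint [Fintype K] (hK : Fintype.card K = q ^ n)
    (h : Fin n → K) (hh : Function.Surjective fun y : K => ∑ i : Fin n, h i * y ^ q ^ (i : ℕ)) :
    Function.Surjective fun z : K => ∑ i : Fin n, (z * h i) ^ q ^ ((n - 1) * i) := by
  have hadd := add_pow_of_card_eq_pow hK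
  have hper := pow_pow_of_card_eq_pow hK
  let w : K →+ K := AddMonoidHom.mk' (fun z => ∑ i : Fin n, (z * h i) ^ q ^ ((n - 1) * i))
    fun x y => by simp only [add_mul, add_pow_pow_of_add_pow hadd, sum_add_distrib]
  refine Finite.injective_iff_surjective.1 ((injective_iff_map_eq_zero w).2 fun z hz => ?_)
  by_contra hz0
  obtain ⟨u, hu⟩ := exists_frobeniusTrace_ne_zero hK
  obtain ⟨y, hy⟩ := hh (z⁻¹ * u)
  apply hu
  calc frobeniusTrace q n u = frobeniusTrace q n (z * (z⁻¹ * u)) := by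
        rw [mul_inv_cancel_left₀ hz0]
    _ = frobeniusTrace q n (w z * y) := by
        rw [← hy, frobeniusTrace_mul_sum_mul_pow_pow hadd hper]; rfl
    _ = 0 := by
        simp [hz, frobeniusTrace, (zero_lt_one.trans (one_lt_of_card_eq_pow hK)).ne']

end Trace

theorem stmt1_general (q n : ℕ)
    (K : Type*) [Field K] [Fintype K] (hK : Fintype.card K = q ^ n)
    (M : Matrix (ZMod n) (ZMod n) K)
    (h : Fin n → K)
    (hbij : Function.Bijective fun x : K => ∑ i : Fin n, h i * x ^ q ^ (i : ℕ)) :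
    (∑ i : Fin n, h i • (sigmaTwist q)^[(i : ℕ)] M) ∈
        Submodule.span K {A | ∃ z : K, A = contractionD q n z M} ∧
    {A | ∃ z : K, A = contractionD q n z (∑ i : Fin n, h i • (sigmaTwist q)^[(i : ℕ)] M)} =
      {A | ∃ z : K, A = contractionD q n z M} := by
  have hadd := FiniteField.add_pow_of_card_eq_pow hK
  have hper := FiniteField.pow_pow_of_card_eq_pow hK
  refine ⟨?_, ?_⟩
  · rw [span_contractionD_eq_range hK]
    exact ⟨h, Fintype.linearCombination_apply K _ h⟩
  · have hw := FiniteField.surjective_sum_mul_pow_pow_adjoint hK h hbij.2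
    ext A
    simp only [Set.mem_ofPred_eq, contractionD_sum_smul_sigmaTwist_iterate hadd hper]
    exact (hw.exists (p := fun u => A = contractionD q n u M)).symm

/-- If `h(x) = ∑ hᵢ x^{qⁱ}` is an invertible `𝔽_q`-linear map of `K` and
`M' = ∑ hᵢ • M^{[σⁱ]}`, then `M'` lies in the `K`-span of the contraction space of `M`,
and the contraction spaces of `M'` and `M` coincide. -/
theorem stmt1 (q n : ℕ) [NeZero n]
    (hq : ∃ p k : ℕ, p.Prime ∧ 0 < k ∧ q = p ^ k)
    (K : Type*) [Field K] [Fintype K] (hK : Fintype.card K = q ^ n)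
    (M : Matrix (ZMod n) (ZMod n) K)
    (h : Fin n → K)
    (hbij : Function.Bijective fun x : K => ∑ i : Fin n, h i * x ^ q ^ (i : ℕ)) :
    (∑ i : Fin n, h i • (sigmaTwist q)^[(i : ℕ)] M) ∈
        Submodule.span K {A | ∃ z : K, A = contractionD q n z M} ∧
    {A | ∃ z : K, A = contractionD q n z (∑ i : Fin n, h i • (sigmaTwist q)^[(i : ℕ)] M)} =
      {A | ∃ z : K, A = contractionD q n z M} :=
  stmt1_general q n K hK M h hbij
end

section
/- Let v ∈ F^{N+1} be nonzero. Then H(v)² = 4·Q(v)^{q+1} if and only if there exist u, w ∈ 𝔽_q^{N+1}, linearly independent over F, with v ∈ span_F{u, w}, such that the number of one-dimensional 𝔽_q-subspaces ⟨(s,t)⟩ of 𝔽_q² with Q(su + tw) = 0 is equal to 1 or to q+1. (That is, H² − 4Q^{q+1} = 0 is an equation for the quasi-Hermitian variety of PG(N,q²) obtained as the union of the extended lines of the Baer subgeometry meeting the subquadric in exactly one or exactly q+1 points.) -/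
/-- The quadratic polynomial `Q(x) = ∑_{i,j} c_{ij} x_i x_j` with coefficient
matrix `c`. -/
def Qpoly {F : Type*} [Field F] {m : ℕ} (c : Fin m → Fin m → F)
    (x : Fin m → F) : F :=
  ∑ i, ∑ j, c i j * x i * x j

/-- The polar form `b(u,v) = Q(u+v) - Q(u) - Q(v)` of `Q`. -/
def polarB {F : Type*} [Field F] {m : ℕ} (c : Fin m → Fin m → F)
    (x y : Fin m → F) : F :=
  Qpoly c (x + y) - Qpoly c x - Qpoly c y

/-- The Hermitian form `H(v) = b(v, φ(v))` where `φ` is the coordinatewise `q`-th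
power map. -/
def Hgen (q : ℕ) {F : Type*} [Field F] {m : ℕ} (c : Fin m → Fin m → F)
    (x : Fin m → F) : F :=
  polarB c x fun i => x i ^ q

/-- The number of one-dimensional `𝔽_q`-subspaces `⟨(s,t)⟩` of `𝔽_q²` with
`Q(s·u + t·w) = 0`. -/
noncomputable def tangentCountGen (q : ℕ) {F : Type*} [Field F] {m : ℕ}
    (c : Fin m → Fin m → F) (u w : Fin m → F) : ℕ :=
  Set.ncard {L : Set (F × F) | ∃ s t : F, s ^ q = s ∧ t ^ q = t ∧ (s, t) ≠ (0, 0) ∧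
    Qpoly c (fun i => s * u i + t * w i) = 0 ∧
    L = {p : F × F | ∃ e : F, e ^ q = e ∧ p = (e * s, e * t)}}

/-!
Write `φ` for the coordinatewise Frobenius `x ↦ x ^ q` and
`Δ(u, w) = b(u, w)² - 4 Q(u) Q(w)` for the discriminant of `Q` on the pencil spanned by `u`
and `w`. Then `H(v)² - 4 Q(v)^(q+1) = Δ(v, φ v)`, and `Δ` is multiplied by the square of the
determinant under a change of basis of the pencil.

For `𝔽_q`-rational `u, w` the binary form `Q(s u + t w)` has coefficients in `𝔽_q`; it vanishes
at exactly one or all `q + 1` points of `PG(1, q)` iff `Δ(u, w) = 0`, and otherwise at `0` or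
`2`. If `v = a u + b w` then `φ v = a^q u + b^q w`, which gives one direction. Conversely, if
`v` and `φ v` are independent, their span is `φ`-stable, hence spanned by the rational vectors
`v + φ v` and `λ v + λ^q φ v` for any `λ ∉ 𝔽_q`. If instead `v` is a multiple of a rational
vector `u`, Chevalley–Warning over `𝔽_q` yields a rational `w` outside `⟨u⟩` with
`b(u, w) = 0`, and with `Q(w) = 0` as well when `Q(u) ≠ 0`; either way `Δ(u, w) = 0`.
-/

section QuadraticForm

variable {F : Type*} [Field F] {m : ℕ} (c : Fin m → Fin m → F)

lemma Qpoly_smul_add_smul (a b : F) (u w : Fin m → F) :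
    Qpoly c (a • u + b • w) = a ^ 2 * Qpoly c u + a * b * polarB c u w + b ^ 2 * Qpoly c w := by
  simp only [polarB, Qpoly, Pi.add_apply, Pi.smul_apply, smul_eq_mul, Finset.mul_sum,
    ← Finset.sum_add_distrib, ← Finset.sum_sub_distrib]
  refine Finset.sum_congr rfl fun i _ => Finset.sum_congr rfl fun j _ => ?_
  ring

lemma Qpoly_smul (a : F) (u : Fin m → F) : Qpoly c (a • u) = a ^ 2 * Qpoly c u := by
  simpa using Qpoly_smul_add_smul c a 0 u u

lemma polarB_smul_add_smul (a b a' b' : F) (u w : Fin m → F) :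
    polarB c (a • u + b • w) (a' • u + b' • w) =
      2 * a * a' * Qpoly c u + (a * b' + a' * b) * polarB c u w + 2 * b * b' * Qpoly c w := by
  have h : a • u + b • w + (a' • u + b' • w) = (a + a') • u + (b + b') • w := by module
  rw [polarB, h, Qpoly_smul_add_smul, Qpoly_smul_add_smul, Qpoly_smul_add_smul]
  ring

lemma polarB_eq_sum (u w : Fin m → F) :
    polarB c u w = ∑ j, (∑ i, (c i j + c j i) * u i) * w j := by
  have h : polarB c u w = ∑ i, ∑ j, (c i j * u i * w j + c i j * w i * u j) := by
    simp only [polarB, Qpoly, Pi.add_apply, ← Finset.sum_sub_distrib]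
    refine Finset.sum_congr rfl fun i _ => Finset.sum_congr rfl fun j _ => ?_
    ring
  rw [h, Finset.sum_comm]
  simp only [Finset.sum_mul, add_mul, Finset.sum_add_distrib]
  congr 1
  rw [Finset.sum_comm]
  exact Finset.sum_congr rfl fun i _ => Finset.sum_congr rfl fun j _ => by ring

lemma Qpoly_map {F' : Type*} [Field F'] (f : F →+* F') (x : Fin m → F) :
    Qpoly (fun i j => f (c i j)) (fun i => f (x i)) = f (Qpoly c x) := by
  simp [Qpoly, map_sum, map_mul]

lemma polarB_map {F' : Type*} [Field F'] (f : F →+* F') (x y : Fin m → F) :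
    polarB (fun i j => f (c i j)) (fun i => f (x i)) (fun i => f (y i)) = f (polarB c x y) := by
  have hadd : (fun i => f (x i)) + (fun i => f (y i)) = fun i => f ((x + y) i) := by
    funext i
    simp
  rw [polarB, polarB, hadd, map_sub, map_sub, Qpoly_map, Qpoly_map, Qpoly_map]

lemma Qpoly_mem (K : Subfield F) (hc : ∀ i j, c i j ∈ K) {u : Fin m → F} (hu : ∀ i, u i ∈ K) :
    Qpoly c u ∈ K :=
  K.sum_mem fun i _ => K.sum_mem fun j _ => K.mul_mem (K.mul_mem (hc i j) (hu i)) (hu j)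

lemma polarB_mem (K : Subfield F) (hc : ∀ i j, c i j ∈ K) {u w : Fin m → F}
    (hu : ∀ i, u i ∈ K) (hw : ∀ i, w i ∈ K) : polarB c u w ∈ K :=
  K.sub_mem
    (K.sub_mem (Qpoly_mem c K hc fun i => K.add_mem (hu i) (hw i)) (Qpoly_mem c K hc hu))
    (Qpoly_mem c K hc hw)

def pairDiscr (u w : Fin m → F) : F :=
  polarB c u w ^ 2 - 4 * Qpoly c u * Qpoly c w

lemma pairDiscr_smul_add_smul (a b a' b' : F) (u w : Fin m → F) :
    pairDiscr c (a • u + b • w) (a' • u + b' • w) = (a * b' - a' * b) ^ 2 * pairDiscr c u w := by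
  rw [pairDiscr, pairDiscr, polarB_smul_add_smul, Qpoly_smul_add_smul, Qpoly_smul_add_smul]
  ring

end QuadraticForm

lemma LinearIndependent.pair_smul_add_smul {F V : Type*} [Field F] [AddCommGroup V]
    [Module F V] {x y : V} (h : LinearIndependent F ![x, y]) {a b c d : F}
    (hdet : a * d - b * c ≠ 0) :
    LinearIndependent F ![a • x + b • y, c • x + d • y] := by
  refine LinearIndependent.pair_iff.2 fun s t hst => ?_
  obtain ⟨h₁, h₂⟩ := LinearIndependent.pair_iff.1 h (s * a + t * c) (s * b + t * d)
    (by rw [← hst]; module)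
  have hs : s * (a * d - b * c) = 0 := by linear_combination d * h₁ - c * h₂
  have ht : t * (a * d - b * c) = 0 := by linear_combination a * h₂ - b * h₁
  exact ⟨(mul_eq_zero.1 hs).resolve_right hdet, (mul_eq_zero.1 ht).resolve_right hdet⟩

lemma mem_span_pair_smul_add_smul {F V : Type*} [Field F] [AddCommGroup V] [Module F V]
    (x y : V) {a b c d : F} (hdet : a * d - b * c ≠ 0) :
    x ∈ Submodule.span F {a • x + b • y, c • x + d • y} := by
  refine Submodule.mem_span_pair.2 ⟨(a * d - b * c)⁻¹ * d, -((a * d - b * c)⁻¹ * b), ?_⟩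
  calc _ = (a * d - b * c)⁻¹ • ((a * d - b * c) • x) := by module
    _ = x := inv_smul_smul₀ hdet x

section BinaryForm

variable {F : Type*} [Field F] (K : Subfield F)

/-- The point `⟨(s, t)⟩` of `PG(1, K)`, as the set `K • (s, t)` used in `tangentCountGen`. -/
def projPoint (s t : F) : Set (F × F) :=
  {p | ∃ e ∈ K, p = (e * s, e * t)}

def binaryZeros (A B C : F) : Set (Set (F × F)) :=
  {L | ∃ s ∈ K, ∃ t ∈ K, (s, t) ≠ 0 ∧ s ^ 2 * A + s * t * B + t ^ 2 * C = 0 ∧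
    L = projPoint K s t}

variable {K}

lemma projPoint_smul {e : F} (he : e ∈ K) (he0 : e ≠ 0) (s t : F) :
    projPoint K (e * s) (e * t) = projPoint K s t := by
  ext p
  constructor
  · rintro ⟨e', he', rfl⟩
    exact ⟨e' * e, K.mul_mem he' he, by simp only [mul_assoc]⟩
  · rintro ⟨e', he', rfl⟩
    exact ⟨e' * e⁻¹, K.mul_mem he' (K.inv_mem he), by field_simp⟩

lemma projPoint_eq_projPoint_iff {s t s' t' : F} (hs : s ∈ K) (ht : t ∈ K) (hs' : s' ∈ K)
    (ht' : t' ∈ K) (hst : (s, t) ≠ 0) (hst' : (s', t') ≠ 0) :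
    projPoint K s t = projPoint K s' t' ↔ s * t' = s' * t := by
  constructor
  · intro h
    obtain ⟨e, -, he⟩ : (s', t') ∈ projPoint K s t := h ▸ ⟨1, K.one_mem, by simp⟩
    simp only [Prod.mk.injEq] at he
    rw [he.1, he.2]
    ring
  · intro h
    obtain ⟨e, he, rfl, rfl⟩ : ∃ e ∈ K, s' = e * s ∧ t' = e * t := by
      by_cases ht0 : t = 0
      · subst ht0
        have hs0 : s ≠ 0 := by rintro rfl; exact hst rfl
        exact ⟨s' / s, K.div_mem hs' hs, by field_simp, by simpa [hs0] using h⟩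
      · exact ⟨t' / t, K.div_mem ht' ht, by field_simp; linear_combination -h, by field_simp⟩
    have he0 : e ≠ 0 := by rintro rfl; exact hst' (by simp)
    exact (projPoint_smul he he0 s t).symm

lemma binaryZeros_mul {s₁ t₁ s₂ t₂ : F} (hs₁ : s₁ ∈ K) (ht₁ : t₁ ∈ K) (hs₂ : s₂ ∈ K)
    (ht₂ : t₂ ∈ K) (h₁ : (s₁, t₁) ≠ 0) (h₂ : (s₂, t₂) ≠ 0) :
    binaryZeros K (t₁ * t₂) (-(t₁ * s₂ + t₂ * s₁)) (s₁ * s₂) =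
      {projPoint K s₁ t₁, projPoint K s₂ t₂} := by
  ext L
  constructor
  · rintro ⟨s, hs, t, ht, hst, hf, rfl⟩
    have hf' : (s * t₁ - s₁ * t) * (s * t₂ - s₂ * t) = 0 := by linear_combination hf
    rcases mul_eq_zero.1 hf' with h | h
    · exact .inl ((projPoint_eq_projPoint_iff hs ht hs₁ ht₁ hst h₁).2 (sub_eq_zero.1 h))
    · exact .inr ((projPoint_eq_projPoint_iff hs ht hs₂ ht₂ hst h₂).2 (sub_eq_zero.1 h))
  · rintro (rfl | rfl)
    · exact ⟨s₁, hs₁, t₁, ht₁, h₁, by ring, rfl⟩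
    · exact ⟨s₂, hs₂, t₂, ht₂, h₂, by ring, rfl⟩

lemma ncard_binaryZeros_zero [Finite K] : (binaryZeros K 0 0 0).ncard = Nat.card K + 1 := by
  have hzeros : binaryZeros K 0 0 0 =
      insert (projPoint K 0 1) (Set.range fun x : K => projPoint K 1 x) := by
    ext L
    constructor
    · rintro ⟨s, hs, t, ht, hst, -, rfl⟩
      by_cases hs0 : s = 0
      · subst hs0
        left
        exact (projPoint_eq_projPoint_iff K.zero_mem ht K.zero_mem K.one_mem hst
          (by simp)).2 (by ring)
      · right
        refine ⟨⟨t / s, K.div_mem ht hs⟩,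
          (projPoint_eq_projPoint_iff K.one_mem (K.div_mem ht hs) hs ht (by simp) hst).2 ?_⟩
        field_simp
    · rintro (rfl | ⟨x, rfl⟩)
      · exact ⟨0, K.zero_mem, 1, K.one_mem, by simp, by ring, rfl⟩
      · exact ⟨1, K.one_mem, x, x.2, by simp, by ring, rfl⟩
  have hinj : Function.Injective fun x : K => projPoint K 1 x := by
    intro x y h
    have := (projPoint_eq_projPoint_iff K.one_mem x.2 K.one_mem y.2 (by simp) (by simp)).1 h
    exact Subtype.ext (by simpa using this.symm)
  have hnotMem : projPoint K 0 1 ∉ Set.range fun x : K => projPoint K 1 x := by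
    rintro ⟨x, h⟩
    have := (projPoint_eq_projPoint_iff K.one_mem x.2 K.zero_mem K.one_mem (by simp)
      (by simp)).1 h
    simp at this
  rw [hzeros, Set.ncard_insert_of_notMem hnotMem, Set.ncard_range_of_injective hinj]

lemma binaryZeros_eq_empty {A B C : F} (hA : A ∈ K) (hB : B ∈ K) (hA0 : A ≠ 0)
    (hD : ∀ δ ∈ K, δ ^ 2 ≠ B ^ 2 - 4 * A * C) : binaryZeros K A B C = ∅ := by
  refine Set.eq_empty_of_forall_notMem ?_
  rintro L ⟨s, hs, t, ht, hst, hf, -⟩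
  have ht0 : t ≠ 0 := by
    rintro rfl
    have hs0 : s ≠ 0 := by rintro rfl; exact hst rfl
    simp_all
  refine hD ((2 * A * s + B * t) / t) (K.div_mem ?_ ht) ?_
  · exact K.add_mem (K.mul_mem (K.mul_mem (ofNat_mem K 2) hA) hs) (K.mul_mem hB ht)
  · field_simp
    linear_combination 4 * A * hf

lemma exists_eq_mul_or_binaryZeros_eq_empty (h2 : (2 : F) ≠ 0) {A B C : F} (hA : A ∈ K)
    (hB : B ∈ K) (hC : C ∈ K) (h0 : ¬(A = 0 ∧ B = 0 ∧ C = 0)) :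
    (∃ s₁ ∈ K, ∃ t₁ ∈ K, ∃ s₂ ∈ K, ∃ t₂ ∈ K, (s₁, t₁) ≠ 0 ∧ (s₂, t₂) ≠ 0 ∧
        A = t₁ * t₂ ∧ B = -(t₁ * s₂ + t₂ * s₁) ∧ C = s₁ * s₂) ∨
      (binaryZeros K A B C = ∅ ∧ B ^ 2 - 4 * A * C ≠ 0) := by
  by_cases hA0 : A = 0
  · subst hA0
    have hBC : (C, -B) ≠ 0 := by simpa [Prod.ext_iff, and_comm] using h0
    exact .inl ⟨1, K.one_mem, 0, K.zero_mem, C, hC, -B, K.neg_mem hB, by simp, hBC,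
      by ring, by ring, by ring⟩
  by_cases hδ : ∃ δ ∈ K, δ ^ 2 = B ^ 2 - 4 * A * C
  · obtain ⟨δ, hδ, hδ2⟩ := hδ
    have h2A : 2 * A ≠ 0 := mul_ne_zero h2 hA0
    refine .inl ⟨(-B + δ) / (2 * A), ?_, 1, K.one_mem, (-B - δ) / 2, ?_, A, hA, by simp,
      by simp [hA0], by ring, by field_simp; ring, by field_simp; linear_combination hδ2⟩
    · exact K.div_mem (K.add_mem (K.neg_mem hB) hδ) (K.mul_mem (ofNat_mem K 2) hA)
    · exact K.div_mem (K.sub_mem (K.neg_mem hB) hδ) (ofNat_mem K 2)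
  · push Not at hδ
    exact .inr ⟨binaryZeros_eq_empty hA hB hA0 hδ, fun h => hδ 0 K.zero_mem (by simp [h])⟩

lemma ncard_binaryZeros_eq_one_or_eq_card_add_one_iff [Finite K] (h2 : (2 : F) ≠ 0)
    {A B C : F} (hA : A ∈ K) (hB : B ∈ K) (hC : C ∈ K) :
    ((binaryZeros K A B C).ncard = 1 ∨ (binaryZeros K A B C).ncard = Nat.card K + 1) ↔
      B ^ 2 - 4 * A * C = 0 := by
  have hcard : 1 < Nat.card K := Finite.one_lt_card
  by_cases h0 : A = 0 ∧ B = 0 ∧ C = 0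
  · obtain ⟨rfl, rfl, rfl⟩ := h0
    simp [ncard_binaryZeros_zero]
  obtain ⟨s₁, hs₁, t₁, ht₁, s₂, hs₂, t₂, ht₂, h₁, h₂, rfl, rfl, rfl⟩ | ⟨hempty, hD⟩ :=
    exists_eq_mul_or_binaryZeros_eq_empty h2 hA hB hC h0
  · have hD : (-(t₁ * s₂ + t₂ * s₁)) ^ 2 - 4 * (t₁ * t₂) * (s₁ * s₂) =
        (s₁ * t₂ - s₂ * t₁) ^ 2 := by ring
    rw [binaryZeros_mul hs₁ ht₁ hs₂ ht₂ h₁ h₂, hD, pow_eq_zero_iff two_ne_zero, sub_eq_zero,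
      ← projPoint_eq_projPoint_iff hs₁ ht₁ hs₂ ht₂ h₁ h₂]
    by_cases heq : projPoint K s₁ t₁ = projPoint K s₂ t₂
    · simp [heq]
    · rw [Set.ncard_pair heq, iff_false_intro heq, iff_false]
      omega
  · rw [hempty, Set.ncard_empty, iff_false_intro hD, iff_false]
    omega

end BinaryForm

lemma tangentCountGen_eq_ncard_binaryZeros {F : Type*} [Field F] {K : Subfield F} {q : ℕ}
    (hK : ∀ x, x ∈ K ↔ x ^ q = x) {m : ℕ} (c : Fin m → Fin m → F) (u w : Fin m → F) :
    tangentCountGen q c u w =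
      (binaryZeros K (Qpoly c u) (polarB c u w) (Qpoly c w)).ncard := by
  have hQ (s t : F) : Qpoly c (fun i => s * u i + t * w i) =
      s ^ 2 * Qpoly c u + s * t * polarB c u w + t ^ 2 * Qpoly c w :=
    Qpoly_smul_add_smul c s t u w
  simp only [tangentCountGen, binaryZeros, projPoint, hK, hQ, Prod.zero_eq_mk, exists_and_left]

lemma tangentCountGen_eq_one_or_eq_add_one_iff {F : Type*} [Field F] {K : Subfield F}
    [Finite K] {q : ℕ} (hK : ∀ x, x ∈ K ↔ x ^ q = x) (hcard : Nat.card K = q)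
    (h2 : (2 : F) ≠ 0) {m : ℕ} {c : Fin m → Fin m → F} (hc : ∀ i j, c i j ∈ K) {u w : Fin m → F} (hu : ∀ i, u i ∈ K)
    (hw : ∀ i, w i ∈ K) :
    (tangentCountGen q c u w = 1 ∨ tangentCountGen q c u w = q + 1) ↔ pairDiscr c u w = 0 := by
  rw [tangentCountGen_eq_ncard_binaryZeros hK, ← hcard]
  exact ncard_binaryZeros_eq_one_or_eq_card_add_one_iff h2 (Qpoly_mem c K hc hu)
    (polarB_mem c K hc hu hw) (Qpoly_mem c K hc hw)

section ChevalleyWarning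

open MvPolynomial

variable {K : Type*} [Field K]

lemma MvPolynomial.IsHomogeneous.eval_zero {σ : Type*} {f : MvPolynomial σ K} {d : ℕ}
    (hf : f.IsHomogeneous d) (hd : d ≠ 0) : eval 0 f = 0 := by
  rw [MvPolynomial.eval_zero, constantCoeff_eq]
  exact hf.coeff_eq_zero (by simpa using hd.symm)

lemma exists_ne_zero_eval_eq_zero_of_isHomogeneous [Fintype K] {σ : Type*} [Fintype σ]
    [DecidableEq σ] {f₁ f₂ : MvPolynomial σ K} {d₁ d₂ : ℕ} (hf₁ : f₁.IsHomogeneous d₁)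
    (hf₂ : f₂.IsHomogeneous d₂) (hd₁ : d₁ ≠ 0) (hd₂ : d₂ ≠ 0) (h : d₁ + d₂ < Fintype.card σ) :
    ∃ x ≠ 0, eval x f₁ = 0 ∧ eval x f₂ = 0 := by
  classical
  obtain ⟨p, _⟩ := CharP.exists K
  have := Fact.mk (CharP.char_is_prime K p)
  -- Chevalley–Warning: `p` divides the number of common zeros, and `0` is one of them.
  have hdvd := char_dvd_card_solutions_of_add_lt p
    ((add_le_add hf₁.totalDegree_le hf₂.totalDegree_le).trans_lt h)
  have hzero : eval 0 f₁ = 0 ∧ eval 0 f₂ = 0 := ⟨hf₁.eval_zero hd₁, hf₂.eval_zero hd₂⟩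
  have hpos : 0 < Fintype.card {x : σ → K // eval x f₁ = 0 ∧ eval x f₂ = 0} :=
    Fintype.card_pos_iff.2 ⟨⟨0, hzero⟩⟩
  have hcard := (Fact.out : p.Prime).one_lt.trans_le (Nat.le_of_dvd hpos hdvd)
  obtain ⟨⟨x, hx⟩, hne⟩ := Fintype.exists_ne_of_one_lt_card hcard ⟨0, hzero⟩
  exact ⟨x, fun h => hne (Subtype.ext h), hx⟩

variable {m : ℕ} (c : Fin m → Fin m → K)

lemma exists_isHomogeneous_eval_eq_Qpoly :
    ∃ f : MvPolynomial (Fin m) K, f.IsHomogeneous 2 ∧ ∀ x, eval x f = Qpoly c x :=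
  ⟨∑ i, ∑ j, C (c i j) * X i * X j,
    IsHomogeneous.sum _ _ _ fun i _ => IsHomogeneous.sum _ _ _ fun j _ =>
      (isHomogeneous_C_mul_X (c i j) i).mul (isHomogeneous_X K j),
    fun x => by simp [Qpoly]⟩

lemma exists_isHomogeneous_eval_eq_polarB (u : Fin m → K) :
    ∃ f : MvPolynomial (Fin m) K, f.IsHomogeneous 1 ∧ ∀ x, eval x f = polarB c u x :=
  ⟨∑ j, C (∑ i, (c i j + c j i) * u i) * X j,
    IsHomogeneous.sum _ _ _ fun j _ => isHomogeneous_C_mul_X _ j,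
    fun x => by simp [polarB_eq_sum]⟩

lemma exists_ne_zero_Qpoly_eq_zero_polarB_eq_zero [Fintype K] (hm : 3 < m) (u : Fin m → K) :
    ∃ w ≠ 0, Qpoly c w = 0 ∧ polarB c u w = 0 := by
  obtain ⟨f₁, hf₁, hf₁x⟩ := exists_isHomogeneous_eval_eq_Qpoly c
  obtain ⟨f₂, hf₂, hf₂x⟩ := exists_isHomogeneous_eval_eq_polarB c u
  simpa only [hf₁x, hf₂x] using exists_ne_zero_eval_eq_zero_of_isHomogeneous hf₁ hf₂
    two_ne_zero one_ne_zero (by simpa using hm)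

lemma exists_ne_zero_polarB_eq_zero_apply_eq_zero [Fintype K] (hm : 2 < m) (u : Fin m → K)
    (i₀ : Fin m) :
    ∃ w ≠ 0, polarB c u w = 0 ∧ w i₀ = 0 := by
  obtain ⟨f, hf, hfx⟩ := exists_isHomogeneous_eval_eq_polarB c u
  simpa only [hfx, eval_X] using exists_ne_zero_eval_eq_zero_of_isHomogeneous hf
    (isHomogeneous_X K i₀) one_ne_zero one_ne_zero (by simpa using hm)

end ChevalleyWarning

lemma exists_linearIndependent_pairDiscr_eq_zero {F : Type*} [Field F] (K : Subfield F)
    [Finite K] {m : ℕ} (hm : 3 < m) {c : Fin m → Fin m → F} (hc : ∀ i j, c i j ∈ K) {u : Fin m → F}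
    (hu : ∀ i, u i ∈ K) (hu0 : u ≠ 0) :
    ∃ w, (∀ i, w i ∈ K) ∧ LinearIndependent F ![u, w] ∧ pairDiscr c u w = 0 := by
  have := Fintype.ofFinite K
  let cK : Fin m → Fin m → K := fun i j => ⟨c i j, hc i j⟩
  let uK : Fin m → K := fun i => ⟨u i, hu i⟩
  have hQ (x : Fin m → K) : Qpoly c (fun i => x i) = Qpoly cK x := Qpoly_map cK K.subtype x
  have hB (x : Fin m → K) : polarB c u (fun i => x i) = polarB cK uK x :=
    polarB_map cK K.subtype uK x
  have hli {x : Fin m → K} (hx0 : x ≠ 0)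
      (hsmul : ∀ a : F, a • u = (fun i => (x i : F)) → a = 0) :
      LinearIndependent F ![u, fun i => (x i : F)] := by
    refine (LinearIndependent.pair_iff' hu0).2 fun a ha => hx0 (funext fun i => ?_)
    simpa [hsmul a ha] using (congrFun ha i).symm
  by_cases hQu : Qpoly c u = 0
  · obtain ⟨i₀, hi₀⟩ := Function.ne_iff.1 hu0
    obtain ⟨x, hx0, hxB, hxi⟩ :=
      exists_ne_zero_polarB_eq_zero_apply_eq_zero cK (by omega) uK i₀
    refine ⟨fun i => x i, fun i => (x i).2, hli hx0 fun a ha => ?_, ?_⟩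
    · have : a * u i₀ = 0 := by simpa [hxi] using congrFun ha i₀
      exact (mul_eq_zero.1 this).resolve_right hi₀
    · rw [pairDiscr, hQu, hB, hxB]
      simp
  · obtain ⟨x, hx0, hxQ, hxB⟩ := exists_ne_zero_Qpoly_eq_zero_polarB_eq_zero cK hm uK
    refine ⟨fun i => x i, fun i => (x i).2, hli hx0 fun a ha => ?_, ?_⟩
    · have : a ^ 2 * Qpoly c u = 0 := by
        rw [← Qpoly_smul, ha, hQ, hxQ, ZeroMemClass.coe_zero]
      exact pow_eq_zero_iff two_ne_zero |>.1 ((mul_eq_zero.1 this).resolve_right hQu)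
    · rw [pairDiscr, hQ, hB, hxQ, hxB]
      simp

section Conjugation

variable {F : Type*} [Field F] {m : ℕ} (c : Fin m → Fin m → F) (σ : F →+* F)

lemma Hgen_sq_eq_iff {q : ℕ} (hσ : ∀ x, σ x = x ^ q) (hc : ∀ i j, σ (c i j) = c i j)
    (v : Fin m → F) :
    Hgen q c v ^ 2 = 4 * Qpoly c v ^ (q + 1) ↔ pairDiscr c v (fun i => σ (v i)) = 0 := by
  have hQ : Qpoly c (fun i => σ (v i)) = Qpoly c v ^ q := by
    conv_lhs => rw [show c = fun i j => σ (c i j) from funext₂ fun i j => (hc i j).symm]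
    rw [Qpoly_map, hσ]
  have hφ : (fun i => σ (v i)) = fun i => v i ^ q := funext fun i => hσ (v i)
  rw [pairDiscr, hQ, Hgen, ← hφ, sub_eq_zero, pow_succ]
  ring_nf

lemma pairDiscr_conj_eq_zero_of_mem_span {u w v : Fin m → F} (hu : ∀ i, σ (u i) = u i)
    (hw : ∀ i, σ (w i) = w i) (hv : v ∈ Submodule.span F {u, w}) (hD : pairDiscr c u w = 0) :
    pairDiscr c v (fun i => σ (v i)) = 0 := by
  obtain ⟨a, b, rfl⟩ := Submodule.mem_span_pair.1 hv
  have hconj : (fun i => σ ((a • u + b • w) i)) = σ a • u + σ b • w := by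
    funext i
    simp [hu, hw]
  rw [hconj, pairDiscr_smul_add_smul, hD, mul_zero]

lemma exists_fixed_pair_of_linearIndependent (hσ : Function.Involutive σ) {e : F} (he : σ e ≠ e)
    {v : Fin m → F} (hv : LinearIndependent F ![v, fun i => σ (v i)]) :
    ∃ u w : Fin m → F, (∀ i, σ (u i) = u i) ∧ (∀ i, σ (w i) = w i) ∧
      LinearIndependent F ![u, w] ∧ v ∈ Submodule.span F {u, w} ∧
      pairDiscr c u w = (σ e - e) ^ 2 * pairDiscr c v (fun i => σ (v i)) := by
  have hdet : 1 * σ e - 1 * e ≠ 0 := by simpa [sub_eq_zero] using he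
  refine ⟨(1 : F) • v + (1 : F) • (fun i => σ (v i)), e • v + σ e • (fun i => σ (v i)),
    fun i => ?_, fun i => ?_, hv.pair_smul_add_smul hdet, mem_span_pair_smul_add_smul _ _ hdet,
    by rw [pairDiscr_smul_add_smul]; ring⟩
  · simp [hσ (v i), add_comm]
  · simp [hσ (v i), hσ e, add_comm]

lemma exists_fixed_pair_of_pairDiscr_eq_zero (K : Subfield F) [Finite K]
    (hK : ∀ x, x ∈ K ↔ σ x = x) (hσ : Function.Involutive σ) {e : F} (he : σ e ≠ e) (hm : 3 < m)
    (hc : ∀ i j, c i j ∈ K) {v : Fin m → F} (hv : v ≠ 0)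
    (hD : pairDiscr c v (fun i => σ (v i)) = 0) :
    ∃ u w : Fin m → F, (∀ i, u i ∈ K) ∧ (∀ i, w i ∈ K) ∧ LinearIndependent F ![u, w] ∧
      v ∈ Submodule.span F {u, w} ∧ pairDiscr c u w = 0 := by
  by_cases hli : LinearIndependent F ![v, fun i => σ (v i)]
  · obtain ⟨u, w, hu, hw, huw, hspan, hDuw⟩ :=
      exists_fixed_pair_of_linearIndependent c σ hσ he hli
    exact ⟨u, w, fun i => (hK _).2 (hu i), fun i => (hK _).2 (hw i), huw, hspan,
      by rw [hDuw, hD, mul_zero]⟩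
  -- `σ v = a • v`, so `v` is a multiple of the `σ`-fixed vector `(v i₀)⁻¹ • v`
  obtain ⟨a, ha⟩ : ∃ a : F, a • v = fun i => σ (v i) := by
    simpa [LinearIndependent.pair_iff' hv] using hli
  obtain ⟨i₀, hi₀⟩ := Function.ne_iff.1 hv
  have ha0 : a ≠ 0 := by
    rintro rfl
    exact hi₀ (σ.injective (by simpa using (congrFun ha i₀).symm))
  have hu (i : Fin m) : ((v i₀)⁻¹ • v) i ∈ K := by
    rw [hK, Pi.smul_apply, smul_eq_mul, map_mul, map_inv₀, ← congrFun ha i, ← congrFun ha i₀]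
    simp only [Pi.smul_apply, smul_eq_mul]
    field_simp
  obtain ⟨w, hw, huw, hDuw⟩ :=
    exists_linearIndependent_pairDiscr_eq_zero K hm hc hu (smul_ne_zero (inv_ne_zero hi₀) hv)
  refine ⟨_, w, hu, hw, huw, Submodule.mem_span_pair.2 ⟨v i₀, 0, ?_⟩, hDuw⟩
  rw [zero_smul, add_zero, smul_inv_smul₀ hi₀]

end Conjugation

open Polynomial in
lemma X_pow_sub_X_dvd_X_pow_pow_sub_X (R : Type*) [CommRing R] (p : ℕ) [ExpChar R p]
    (k n : ℕ) :
    (X ^ p ^ k - X : R[X]) ∣ X ^ (p ^ k) ^ n - X := by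
  induction n with
  | zero => simp
  | succ n ih =>
    have h : (X ^ (p ^ k) ^ (n + 1) - X : R[X]) =
        (X ^ (p ^ k) ^ n - X) ^ p ^ k + (X ^ p ^ k - X) := by
      rw [sub_pow_expChar_pow, ← pow_mul X, ← pow_succ]
      ring
    rw [h]
    exact dvd_add (dvd_pow ih (expChar_pow_pos R p k).ne') dvd_rfl

open Polynomial in
lemma natCard_eqLocusField_iterateFrobenius {F : Type*} [Field F] [Fintype F] (p : ℕ)
    [Fact p.Prime] [CharP F p] {k n : ℕ} (hk : k ≠ 0) (hF : Fintype.card F = (p ^ k) ^ n) :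
    Nat.card ((iterateFrobenius F p k).eqLocusField (RingHom.id F)) = p ^ k := by
  let : Algebra (ZMod p) F := ZMod.algebra F p
  have hsplit : Splits ((X ^ p ^ k - X : (ZMod p)[X]).map (algebraMap (ZMod p) F)) := by
    have hdvd : (X ^ p ^ k - X : (ZMod p)[X]) ∣ X ^ Fintype.card F - X := by
      rw [hF]
      exact X_pow_sub_X_dvd_X_pow_pow_sub_X _ p k n
    have hne : (X ^ Fintype.card F - X : (ZMod p)[X]) ≠ 0 :=
      FiniteField.X_pow_card_sub_X_ne_zero _ Fintype.one_lt_card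
    exact (FiniteField.splits_X_pow_card_sub_X p).of_dvd (map_ne_zero hne)
      (Polynomial.map_dvd _ hdvd)
  have hp := (Fact.out : p.Prime).one_lt
  have hcard := card_rootSet_eq_natDegree (galois_poly_separable p (p ^ k) (dvd_pow_self p hk))
    hsplit
  rw [FiniteField.X_pow_card_pow_sub_X_natDegree_eq _ hk hp] at hcard
  rw [← hcard, ← Nat.card_eq_fintype_card]
  congr
  ext x
  simp [mem_rootSet, FiniteField.X_pow_card_pow_sub_X_ne_zero _ hk hp, RingHom.mem_eqLocusField,
    iterateFrobenius_def, sub_eq_zero]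

lemma iterateFrobenius_involutive {F : Type*} [Field F] [Fintype F] (p : ℕ) [Fact p.Prime]
    [CharP F p] {k : ℕ} (hF : Fintype.card F = (p ^ k) ^ 2) :
    Function.Involutive (iterateFrobenius F p k) := fun x => by
  rw [iterateFrobenius_def, iterateFrobenius_def, ← pow_mul, ← sq, ← hF, FiniteField.pow_card]

lemma exists_iterateFrobenius_apply_ne {F : Type*} [Field F] [Fintype F] (p : ℕ) [Fact p.Prime]
    [CharP F p] {k n : ℕ} (hk : k ≠ 0) (hn : n ≠ 1) (hF : Fintype.card F = (p ^ k) ^ n) :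
    ∃ e, iterateFrobenius F p k e ≠ e := by
  by_contra! h
  have hcard := natCard_eqLocusField_iterateFrobenius p hk hF
  have hK : Nat.card ((iterateFrobenius F p k).eqLocusField (RingHom.id F)) = Nat.card F :=
    Nat.card_congr (Equiv.subtypeUnivEquiv h)
  rw [hK, Nat.card_eq_fintype_card, hF] at hcard
  exact hn (Nat.pow_right_injective (Nat.le_self_pow hk p |>.trans' (Fact.out : p.Prime).two_le)
    (hcard.trans (pow_one _).symm))

theorem stmt7_general (q : ℕ) (hq : ∃ p k : ℕ, p.Prime ∧ 0 < k ∧ q = p ^ k) (hodd : Odd q)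
    (F : Type*) [Field F] [Fintype F] (hF : Fintype.card F = q ^ 2)
    (N : ℕ) (hN : 3 ≤ N)
    (c : Fin (N + 1) → Fin (N + 1) → F) (hc : ∀ i j, c i j ^ q = c i j)
    (v : Fin (N + 1) → F) (hv : v ≠ 0) :
    Hgen q c v ^ 2 = 4 * Qpoly c v ^ (q + 1) ↔
      ∃ u w : Fin (N + 1) → F,
        (∀ i, u i ^ q = u i) ∧ (∀ i, w i ^ q = w i) ∧ u ≠ 0 ∧ w ≠ 0 ∧
        LinearIndependent F ![u, w] ∧
        v ∈ Submodule.span F {u, w} ∧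
        (tangentCountGen q c u w = 1 ∨ tangentCountGen q c u w = q + 1) := by
  obtain ⟨p, k, hp, hk, rfl⟩ := hq
  have := Fact.mk hp
  have : CharP F p := charP_of_card_eq_prime_pow (hF.trans (pow_mul p k 2).symm)
  have h2 : (2 : F) ≠ 0 := by
    refine Ring.two_ne_zero ?_
    rw [ringChar.eq F p]
    rintro rfl
    exact Nat.not_odd_iff_even.2 ((Nat.even_pow' hk.ne').2 even_two) hodd
  let σ := iterateFrobenius F p k
  let K := σ.eqLocusField (RingHom.id F)
  have hcount {u w} := tangentCountGen_eq_one_or_eq_add_one_iff (K := K) (fun _ => Iff.rfl)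
    (natCard_eqLocusField_iterateFrobenius p hk.ne' hF) h2 hc (u := u) (w := w)
  obtain ⟨e, he⟩ := exists_iterateFrobenius_apply_ne p hk.ne' (by norm_num) hF
  rw [Hgen_sq_eq_iff c σ (fun _ => rfl) hc]
  constructor
  · intro hD
    obtain ⟨u, w, hu, hw, huw, hspan, hDuw⟩ := exists_fixed_pair_of_pairDiscr_eq_zero c σ K
      (fun _ => Iff.rfl) (iterateFrobenius_involutive p hF) he (by omega) hc hv hD
    exact ⟨u, w, hu, hw, huw.ne_zero 0, huw.ne_zero 1, huw, hspan, (hcount hu hw).2 hDuw⟩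
  · rintro ⟨u, w, hu, hw, -, -, -, hspan, hcnt⟩
    exact pairDiscr_conj_eq_zero_of_mem_span c σ hu hw hspan ((hcount hu hw).1 hcnt)

/-- For a nondegenerate quadric with `𝔽_q`-coefficients in `PG(N,q²)`, `N ≥ 3`:
a nonzero `v` satisfies `H(v)² = 4Q(v)^{q+1}` iff `v` lies on an extended line of the
Baer subgeometry meeting the subquadric in exactly one or exactly `q+1` points.
This gives an equation for the quasi-Hermitian variety of Pavese's construction. -/
theorem stmt7 (q : ℕ) (hq : ∃ p k : ℕ, p.Prime ∧ 0 < k ∧ q = p ^ k) (hodd : Odd q)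
    (F : Type*) [Field F] [Fintype F] (hF : Fintype.card F = q ^ 2)
    (N : ℕ) (hN : 3 ≤ N)
    (c : Fin (N + 1) → Fin (N + 1) → F) (hc : ∀ i j, c i j ^ q = c i j)
    (hnd : (Matrix.of fun i j => c i j + c j i).det ≠ 0)
    (v : Fin (N + 1) → F) (hv : v ≠ 0) :
    Hgen q c v ^ 2 = 4 * Qpoly c v ^ (q + 1) ↔
      ∃ u w : Fin (N + 1) → F,
        (∀ i, u i ^ q = u i) ∧ (∀ i, w i ^ q = w i) ∧ u ≠ 0 ∧ w ≠ 0 ∧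
        LinearIndependent F ![u, w] ∧
        v ∈ Submodule.span F {u, w} ∧
        (tangentCountGen q c u w = 1 ∨ tangentCountGen q c u w = q + 1) :=
  stmt7_general q hq hodd F hF N hN c hc v hv
end

section
/- The set Z₁ has exactly q−3 elements and the set Z₂ has exactly q−1 elements. -/
/-- `Q(α,β,γ,δ) = αδ - βγ`, the quadratic form of the hyperbolic quadric. -/
def Qf {F : Type*} [Field F] (v : Fin 4 → F) : F := v 0 * v 3 - v 1 * v 2

/-- `H(α,β,γ,δ) = α^{q+1} - β^{q+1} - γ^{q+1} + δ^{q+1}`, the Hermitian form. -/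
def Hf (q : ℕ) {F : Type*} [Field F] (v : Fin 4 → F) : F :=
  v 0 ^ (q + 1) - v 1 ^ (q + 1) - v 2 ^ (q + 1) + v 3 ^ (q + 1)

/-- `v = (α,β,γ,δ)` is nonsingular if `(αz + δ^q z^q)x + (γz + β^q z^q)x^q ≠ 0`
for all nonzero `x, z`. -/
def Nonsingular (q : ℕ) {F : Type*} [Field F] (v : Fin 4 → F) : Prop :=
  ∀ x z : F, x ≠ 0 → z ≠ 0 →
    (v 0 * z + v 3 ^ q * z ^ q) * x + (v 2 * z + v 1 ^ q * z ^ q) * x ^ q ≠ 0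

/-- `Δ(v) = H(v)² - 4·Q(v)^{q+1}`. -/
def Deltaf (q : ℕ) {F : Type*} [Field F] (v : Fin 4 → F) : F :=
  Hf q v ^ 2 - 4 * Qf v ^ (q + 1)

/-- A Σ-vector: a nonzero vector of the form `(α, β, β^q, α^q)`. -/
def IsSigmaVec (q : ℕ) {F : Type*} [Field F] (v : Fin 4 → F) : Prop :=
  v ≠ 0 ∧ ∃ α β : F, v = ![α, β, β ^ q, α ^ q]

/-- The sesquilinear form `h(u,v) = u₁v₁^q - u₂v₂^q - u₃v₃^q + u₄v₄^q`. -/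
def hForm (q : ℕ) {F : Type*} [Field F] (u v : Fin 4 → F) : F :=
  u 0 * v 0 ^ q - u 1 * v 1 ^ q - u 2 * v 2 ^ q + u 3 * v 3 ^ q

/-- The one-dimensional `F`-subspace (as a set) spanned by `v`. -/
def Fline {F : Type*} [Field F] (v : Fin 4 → F) : Set (Fin 4 → F) :=
  {x | ∃ a : F, x = a • v}

/-- The number of one-dimensional `𝔽_q`-subspaces `⟨(s,t)⟩` of `𝔽_q²` with
`Q(s·u + t·w) = 0`. -/
noncomputable def tangentCount (q : ℕ) {F : Type*} [Field F] (u w : Fin 4 → F) : ℕ :=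
  Set.ncard {L : Set (F × F) | ∃ s t : F, s ^ q = s ∧ t ^ q = t ∧ (s, t) ≠ (0, 0) ∧
    Qf (fun i => s * u i + t * w i) = 0 ∧
    L = {p : F × F | ∃ e : F, e ^ q = e ∧ p = (e * s, e * t)}}

/-- `Z₁`: the set of `ξ ∉ {0, 1, -1}` such that `1 - ξ⁻²` is a nonzero square of `𝔽_q`. -/
def Zone (q : ℕ) (F : Type*) [Field F] : Set F :=
  {ξ | ξ ≠ 0 ∧ ξ ≠ 1 ∧ ξ ≠ -1 ∧ ∃ s : F, s ^ q = s ∧ s ≠ 0 ∧ 1 - (ξ ^ 2)⁻¹ = s ^ 2}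

/-- `Z₂`: the set of `ξ ≠ 0` such that `1 - ξ⁻²` is a nonzero nonsquare of `𝔽_q`. -/
def Ztwo (q : ℕ) (F : Type*) [Field F] : Set F :=
  {ξ | ξ ≠ 0 ∧ (1 - (ξ ^ 2)⁻¹) ^ q = 1 - (ξ ^ 2)⁻¹ ∧ 1 - (ξ ^ 2)⁻¹ ≠ 0 ∧
    ¬∃ s : F, s ^ q = s ∧ 1 - (ξ ^ 2)⁻¹ = s ^ 2}

/-!
The elements `s` with `s ^ q = s` form a subfield `K ≅ 𝔽_q` of `F`, and since `#F = q²`, every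
element of `K` is a square in `F` by Euler's criterion. Hence for `t ∈ K \ {1}` the equation
`1 - ξ⁻² = t`, i.e. `ξ² = (1 - t)⁻¹`, has exactly two solutions `ξ ∈ F`. So `Z₁` and `Z₂` are
twice as large as the set of nonzero squares `≠ 1` of `K` and the set of nonsquares of `K`, which
have `(q - 1) / 2 - 1` and `(q - 1) / 2` elements.
-/

open Polynomial Finset

theorem Polynomial.X_pow_sub_X_dvd_X_pow_sub_X {R : Type*} [CommRing R] {m n : ℕ} (hm : 0 < m)
    (hn : 0 < n) (h : m - 1 ∣ n - 1) : (X ^ m - X : R[X]) ∣ X ^ n - X := by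
  obtain ⟨c, hc⟩ := h
  have hsub : (X ^ (m - 1) - 1 : R[X]) ∣ X ^ (n - 1) - 1 := by
    simpa [hc, pow_mul] using sub_dvd_pow_sub_pow (X ^ (m - 1) : R[X]) 1 c
  have hfactor : ∀ k, 0 < k → (X ^ k - X : R[X]) = X * (X ^ (k - 1) - 1) := fun k hk => by
    rw [mul_sub, mul_one, ← pow_succ', Nat.sub_add_cancel hk]
  rw [hfactor m hm, hfactor n hn]
  exact mul_dvd_mul_left X hsub

theorem Finset.card_eq_two_mul_card_of_card_fiber_eq_two {α β : Type*} [DecidableEq β]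
    {s : Finset α} {t : Finset β} {f : α → β} (hst : ∀ a ∈ s, f a ∈ t)
    (hfiber : ∀ b ∈ t, #{a ∈ s | f a = b} = 2) : #s = 2 * #t := by
  rw [card_eq_sum_card_fiberwise hst, sum_const_nat hfiber, mul_comm]

section FiniteField

variable {F : Type*} [Field F] [Fintype F]

theorem FiniteField.ringChar_ne_two_of_odd_card (h : Odd (Fintype.card F)) : ringChar F ≠ 2 := by
  rw [Ne, FiniteField.even_card_iff_char_two, ← Nat.even_iff]
  exact Nat.not_even_iff_odd.mpr h

/-- The roots of `X ^ q - X` are distinct because it divides `X ^ #F - X`, whose roots are all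
of `F`, each simple. -/
theorem FiniteField.card_filter_pow_eq_self [DecidableEq F] {q : ℕ} (hq : 1 < q)
    (h : q - 1 ∣ Fintype.card F - 1) : #{x : F | x ^ q = x} = q := by
  have hF : 1 < Fintype.card F := Fintype.one_lt_card
  have hne : (X ^ Fintype.card F - X : F[X]) ≠ 0 := FiniteField.X_pow_card_sub_X_ne_zero F hF
  have hdvd : (X ^ q - X : F[X]) ∣ X ^ Fintype.card F - X :=
    X_pow_sub_X_dvd_X_pow_sub_X (by omega) (by omega) h
  have hsplit : (X ^ q - X : F[X]).Splits :=
    (Nat.card_eq_fintype_card (α := F) ▸ Polynomial.splits_X_pow_nat_card_sub_X).of_dvd hne hdvd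
  have hnodup : (X ^ q - X : F[X]).roots.Nodup := by
    refine Multiset.nodup_of_le (roots.le_of_dvd hne hdvd) ?_
    rw [FiniteField.roots_X_pow_card_sub_X]
    exact univ.nodup
  have hroots : (X ^ q - X : F[X]).roots.toFinset = ({x : F | x ^ q = x} : Finset F) := by
    ext x
    simp [mem_roots (FiniteField.X_pow_card_sub_X_ne_zero F hq), sub_eq_zero]
  rw [← hroots, Multiset.toFinset_card_of_nodup hnodup, ← hsplit.natDegree_eq_card_roots,
    FiniteField.X_pow_card_sub_X_natDegree_eq F hq]

/-- Euler's criterion: `t ^ ((q² - 1) / 2) = (t ^ (q - 1)) ^ ((q + 1) / 2) = 1`. -/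
theorem FiniteField.isSquare_of_pow_eq_self {q : ℕ} (hq : Odd q) (hF : Fintype.card F = q ^ 2)
    {t : F} (ht : t ^ q = t) : IsSquare t := by
  rcases eq_or_ne t 0 with rfl | ht0
  · exact IsSquare.zero
  have hchar : ringChar F ≠ 2 := ringChar_ne_two_of_odd_card (hF ▸ hq.pow)
  obtain ⟨m, rfl⟩ := hq
  have ht1 : t ^ (2 * m) = 1 := by
    refine mul_left_cancel₀ ht0 ?_
    rw [← pow_succ', mul_one, ht]
  have hexp : (2 * m + 1) ^ 2 / 2 = 2 * m * (m + 1) := by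
    rw [show (2 * m + 1) ^ 2 = 2 * (2 * m * (m + 1)) + 1 by ring]
    omega
  rw [FiniteField.isSquare_iff hchar ht0, hF, hexp, pow_mul, ht1, one_pow]

theorem card_filter_sq_eq_sq [DecidableEq F] (hF : ringChar F ≠ 2) {r : F} (hr : r ≠ 0) :
    #{x : F | x ^ 2 = r ^ 2} = 2 := by
  have hpair : ({x : F | x ^ 2 = r ^ 2} : Finset F) = {r, -r} := by
    ext x
    simp [sq_eq_sq_iff_eq_or_eq_neg]
  rw [hpair, card_pair]
  exact fun h => hr ((Ring.eq_self_iff_eq_zero_of_char_ne_two hF).mp h.symm)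

/-- The fibre of `ξ ↦ 1 - ξ⁻²` over `t ≠ 1` is `{ξ | ξ² = (1 - t)⁻¹}`; since `0⁻¹ = 0`, the point
`ξ = 0` lies over `1`. -/
theorem card_filter_one_sub_inv_sq_mem [DecidableEq F] (hF : ringChar F ≠ 2) {A : Finset F}
    (h1 : 1 ∉ A) (hA : ∀ t ∈ A, IsSquare (1 - t)) :
    #{ξ : F | 1 - (ξ ^ 2)⁻¹ ∈ A} = 2 * #A := by
  refine card_eq_two_mul_card_of_card_fiber_eq_two (f := fun ξ => 1 - (ξ ^ 2)⁻¹)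
    (fun ξ hξ => (mem_filter.mp hξ).2) fun t ht => ?_
  obtain ⟨u, hu⟩ := hA t ht
  rw [← sq] at hu
  have hu0 : u ≠ 0 := by
    rintro rfl
    rw [zero_pow two_ne_zero, sub_eq_zero] at hu
    exact h1 (hu ▸ ht)
  have hfiber : ∀ ξ : F, 1 - (ξ ^ 2)⁻¹ = t ↔ ξ ^ 2 = u⁻¹ ^ 2 := fun ξ => by
    rw [inv_pow, ← inv_eq_iff_eq_inv, ← hu]
    constructor <;> intro h <;> linear_combination -h
  refine (congrArg card ?_).trans (card_filter_sq_eq_sq hF (inv_ne_zero hu0))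
  ext ξ
  simp only [mem_filter, mem_univ, true_and, ← hfiber]
  exact ⟨And.right, fun h => ⟨h ▸ ht, h⟩⟩

end FiniteField

namespace Subfield

open scoped Classical

variable {F : Type*} [Field F] [Fintype F] (K : Subfield F)

noncomputable def nonzeroSquares : Finset F := {t | ∃ s ∈ K, s ≠ 0 ∧ t = s ^ 2}

noncomputable def nonsquares : Finset F := {t | t ∈ K ∧ t ≠ 0 ∧ ¬∃ s ∈ K, t = s ^ 2}

theorem one_mem_nonzeroSquares : 1 ∈ K.nonzeroSquares := by
  simpa [nonzeroSquares] using ⟨1, K.one_mem, one_ne_zero, (one_pow 2).symm⟩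

theorem one_notMem_nonsquares : 1 ∉ K.nonsquares := by
  simp only [nonsquares, mem_filter, mem_univ, true_and, not_and, not_not]
  exact fun _ _ => ⟨1, K.one_mem, (one_pow 2).symm⟩

theorem card_filter_mem_ne_zero : #{x | x ∈ K ∧ x ≠ 0} = #{x | x ∈ K} - 1 := by
  rw [← card_erase_of_mem (s := {x | x ∈ K}) (mem_filter.mpr ⟨mem_univ 0, K.zero_mem⟩)]
  congr 1
  ext x
  simp [and_comm]

theorem two_mul_card_nonzeroSquares (hF : ringChar F ≠ 2) :
    2 * #K.nonzeroSquares = #{x | x ∈ K} - 1 := by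
  rw [← card_filter_mem_ne_zero]
  refine (card_eq_two_mul_card_of_card_fiber_eq_two (f := (· ^ 2)) (fun s hs => ?_)
    fun t ht => ?_).symm
  · simp only [mem_filter, mem_univ, true_and] at hs
    simpa [nonzeroSquares] using ⟨s, hs.1, hs.2, rfl⟩
  · obtain ⟨s, hsK, hs0, rfl⟩ : ∃ s ∈ K, s ≠ 0 ∧ t = s ^ 2 := by
      simpa [nonzeroSquares] using ht
    refine (congrArg card ?_).trans (card_filter_sq_eq_sq hF hs0)
    ext x
    simp only [mem_filter, mem_univ, true_and, and_iff_right_iff_imp]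
    intro hx
    rcases sq_eq_sq_iff_eq_or_eq_neg.mp hx with rfl | rfl
    · exact ⟨hsK, hs0⟩
    · exact ⟨K.neg_mem hsK, neg_ne_zero.mpr hs0⟩

theorem card_nonzeroSquares_add_card_nonsquares :
    #K.nonzeroSquares + #K.nonsquares = #{x | x ∈ K} - 1 := by
  rw [← card_filter_mem_ne_zero,
    ← card_filter_add_card_filter_not (s := {x | x ∈ K ∧ x ≠ 0}) fun t => ∃ s ∈ K, t = s ^ 2]
  congr 2 <;> ext t <;> simp only [nonzeroSquares, nonsquares, mem_filter, mem_univ, true_and]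
  · constructor
    · rintro ⟨s, hsK, hs0, rfl⟩
      exact ⟨⟨K.pow_mem hsK 2, pow_ne_zero 2 hs0⟩, s, hsK, rfl⟩
    · rintro ⟨⟨-, ht0⟩, s, hsK, rfl⟩
      exact ⟨s, hsK, fun hs => ht0 (by rw [hs, zero_pow two_ne_zero]), rfl⟩
  · exact and_assoc.symm

variable {K}

theorem card_filter_one_sub_inv_sq_mem_nonzeroSquares (hF : ringChar F ≠ 2)
    (hK : ∀ t ∈ K, IsSquare t) :
    #{ξ : F | 1 - (ξ ^ 2)⁻¹ ∈ K.nonzeroSquares.erase 1} = #{x | x ∈ K} - 3 := by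
  have hsq := K.two_mul_card_nonzeroSquares hF
  rw [card_filter_one_sub_inv_sq_mem hF (notMem_erase 1 _) fun t ht => ?_,
    card_erase_of_mem K.one_mem_nonzeroSquares]
  · omega
  · obtain ⟨s, hsK, -, rfl⟩ : ∃ s ∈ K, s ≠ 0 ∧ t = s ^ 2 := by
      simpa [nonzeroSquares] using mem_of_mem_erase ht
    exact hK _ (K.sub_mem K.one_mem (K.pow_mem hsK 2))

theorem card_filter_one_sub_inv_sq_mem_nonsquares (hF : ringChar F ≠ 2)
    (hK : ∀ t ∈ K, IsSquare t) :
    #{ξ : F | 1 - (ξ ^ 2)⁻¹ ∈ K.nonsquares} = #{x | x ∈ K} - 1 := by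
  have hsq := K.two_mul_card_nonzeroSquares hF
  have hsum := K.card_nonzeroSquares_add_card_nonsquares
  rw [card_filter_one_sub_inv_sq_mem hF K.one_notMem_nonsquares fun t ht => ?_]
  · omega
  · simp only [nonsquares, mem_filter] at ht
    exact hK _ (K.sub_mem K.one_mem ht.2.1)

end Subfield

section

variable {F : Type*} [Field F] [Fintype F] {q : ℕ} {K : Subfield F}

open Classical in
theorem Zone_eq_coe_filter (hK : ∀ s, s ∈ K ↔ s ^ q = s) :
    Zone q F = ↑({ξ | 1 - (ξ ^ 2)⁻¹ ∈ K.nonzeroSquares.erase 1} : Finset F) := by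
  ext ξ
  simp only [Zone, Subfield.nonzeroSquares, Set.mem_ofPred_eq, coe_filter, mem_erase, mem_filter,
    mem_univ, true_and, hK, ne_eq, sub_eq_self, inv_eq_zero, pow_eq_zero_iff two_ne_zero]
  constructor
  · rintro ⟨hξ0, -, -, hs⟩
    exact ⟨hξ0, hs⟩
  · rintro ⟨hξ0, s, hsq, hs0, hs⟩
    have hξ1 : ξ ^ 2 ≠ 1 := fun h => hs0 <| by
      rw [h, inv_one, sub_self] at hs
      exact pow_eq_zero_iff two_ne_zero |>.mp hs.symm
    exact ⟨hξ0, fun h => hξ1 (by simp [h]), fun h => hξ1 (by simp [h]), s, hsq, hs0, hs⟩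

open Classical in
theorem Ztwo_eq_coe_filter (hK : ∀ s, s ∈ K ↔ s ^ q = s) :
    Ztwo q F = ↑({ξ | 1 - (ξ ^ 2)⁻¹ ∈ K.nonsquares} : Finset F) := by
  ext ξ
  simp only [Ztwo, Subfield.nonsquares, Set.mem_ofPred_eq, coe_filter, mem_filter, mem_univ,
    true_and, hK]
  refine ⟨fun h => h.2, fun h => ⟨fun hξ0 => h.2.2 ⟨1, one_pow q, ?_⟩, h⟩⟩
  simp [hξ0]

end

/-- `|Z₁| = q - 3` and `|Z₂| = q - 1`. -/
theorem stmt11 (q : ℕ) (hq : ∃ p k : ℕ, p.Prime ∧ 0 < k ∧ q = p ^ k) (hodd : Odd q)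
    (F : Type*) [Field F] [Fintype F] (hF : Fintype.card F = q ^ 2) :
    (Zone q F).ncard = q - 3 ∧ (Ztwo q F).ncard = q - 1 := by
  classical
  obtain ⟨p, k, hp, hk, rfl⟩ := hq
  have : Fact p.Prime := ⟨hp⟩
  have : CharP F p := charP_of_card_eq_prime_pow (hF.trans (pow_mul p k 2).symm)
  let K := (iterateFrobenius F p k).eqLocusField (RingHom.id F)
  have hK : ∀ s, s ∈ K ↔ s ^ p ^ k = s := fun s => by simp [K, iterateFrobenius_def]
  have hchar : ringChar F ≠ 2 := FiniteField.ringChar_ne_two_of_odd_card (hF ▸ hodd.pow)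
  have hsq : ∀ t ∈ K, IsSquare t := fun t ht =>
    FiniteField.isSquare_of_pow_eq_self hodd hF ((hK t).mp ht)
  have hcard : #{x | x ∈ K} = p ^ k := by
    simp only [hK]
    exact FiniteField.card_filter_pow_eq_self (Nat.one_lt_pow hk.ne' hp.one_lt)
      (hF ▸ Nat.sub_one_dvd_pow_sub_one _ 2)
  rw [Zone_eq_coe_filter hK, Ztwo_eq_coe_filter hK, Set.ncard_coe_finset, Set.ncard_coe_finset,
    Subfield.card_filter_one_sub_inv_sq_mem_nonzeroSquares hchar hsq,
    Subfield.card_filter_one_sub_inv_sq_mem_nonsquares hchar hsq, hcard]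
  exact ⟨rfl, rfl⟩
end
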